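/- arXiv:1811.01243 — 2 statements merged into one kernel-verified Lean document; each statement's English description precedes it below -/
import Mathlib

section
/- For every integer m ≥ 0 there exist 2^{2m+1} dyadic squares Q₁, ..., Q_{2^{2m+1}} contained in [0,1)², each of side length 2^{-2m-1}, such that for any i ≠ j, every dyadic rectangle intersecting both Q_i and Q_j has area at least 2^{-2m}. -/
open MeasureTheory
open scoped ENNReal

/-- A dyadic interval `[k·2^n, (k+1)·2^n)`. -/
def IsDyadicInterval (I : Set ℝ) : Prop :=
  ∃ k n : ℤ, I = Set.Ico ((k : ℝ) * 2 ^ n) (((k : ℝ) + 1) * 2 ^ n)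

/-- An axis-parallel dyadic rectangle in the plane. -/
def IsDyadicRect (R : Set (ℝ × ℝ)) : Prop :=
  ∃ I J : Set ℝ, IsDyadicInterval I ∧ IsDyadicInterval J ∧ R = I ×ˢ J

/-- A dyadic square of side length `2^s`. -/
def IsDyadicSquare (s : ℤ) (Q : Set (ℝ × ℝ)) : Prop :=
  ∃ k l : ℤ, Q = Set.Ico ((k : ℝ) * 2 ^ s) (((k : ℝ) + 1) * 2 ^ s) ×ˢ
      Set.Ico ((l : ℝ) * 2 ^ s) (((l : ℝ) + 1) * 2 ^ s)

def unitSq : Set (ℝ × ℝ) := Set.Ico (0 : ℝ) 1 ×ˢ Set.Ico (0 : ℝ) 1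

/-! The squares form a van der Corput set: the square of a bit string `x` of length `w` has
column index `x` and row index the bit reversal of `x`, at scale `2^{-w}`. A dyadic rectangle
of side lengths `2^{p-w}` and `2^{q-w}` that meets the squares of `x` and `y` forces `x` and `y`
to agree in all bits of position `≥ p`, and their reversals in all bits of position `≥ q`.
When `p + q ≤ w` (or `p = 0`, or `q = 0`) these cover every bit, so distinct squares are met
only by rectangles of area `2^{p+q-2w} ≥ 2^{1-w}`. -/

def dyadicIco (k n : ℤ) : Set ℝ := Set.Ico (k * 2 ^ n) ((k + 1) * 2 ^ n)

lemma mem_dyadicIco_iff {x : ℝ} {k n : ℤ} : x ∈ dyadicIco k n ↔ ⌊x / 2 ^ n⌋ = k := by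
  rw [Int.floor_eq_iff, dyadicIco, Set.mem_Ico, le_div_iff₀ (by positivity),
    div_lt_iff₀ (by positivity)]

lemma floor_div_two_zpow_ediv_two_pow (x : ℝ) (n : ℤ) (d : ℕ) :
    ⌊x / 2 ^ n⌋ / 2 ^ d = ⌊x / 2 ^ (n + d)⌋ := by
  rw [zpow_add₀ two_ne_zero, ← div_div, zpow_natCast]
  exact_mod_cast (Int.floor_div_natCast (x / 2 ^ n) (2 ^ d)).symm

lemma ediv_two_pow_eq_of_meets_dyadicIco {k n a a' s : ℤ}
    (ha : (dyadicIco k n ∩ dyadicIco a s).Nonempty)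
    (ha' : (dyadicIco k n ∩ dyadicIco a' s).Nonempty) :
    a / 2 ^ (n - s).toNat = a' / 2 ^ (n - s).toNat := by
  -- both sides are the index of the dyadic interval of exponent `s + (n - s).toNat ≥ n`
  -- that contains `dyadicIco k n`
  have key : ∀ b, (dyadicIco k n ∩ dyadicIco b s).Nonempty →
      b / 2 ^ (n - s).toNat = k / 2 ^ (s + (n - s).toNat - n).toNat := by
    rintro b ⟨x, hxk, hxb⟩
    rw [mem_dyadicIco_iff] at hxk hxb
    rw [← hxb, ← hxk, floor_div_two_zpow_ediv_two_pow, floor_div_two_zpow_ediv_two_pow]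
    congr 3
    omega
  rw [key a ha, key a' ha']

lemma dyadicIco_subset_Ico_zero_one {a w : ℕ} (ha : a < 2 ^ w) :
    dyadicIco a (-w) ⊆ Set.Ico 0 1 := by
  refine Set.Ico_subset_Ico (by positivity) ?_
  calc ((a : ℤ) + 1 : ℝ) * 2 ^ (-(w : ℤ)) ≤ 2 ^ (w : ℤ) * 2 ^ (-(w : ℤ)) := by
        gcongr
        rw [zpow_natCast]
        exact_mod_cast ha
    _ = 1 := by rw [← zpow_add₀ two_ne_zero, add_neg_cancel, zpow_zero]

lemma volume_dyadicIco (k n : ℤ) : volume (dyadicIco k n) = 2 ^ n := by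
  rw [dyadicIco, Real.volume_Ico, ← sub_mul, add_sub_cancel_left, one_mul]
  have h : (2 : ℝ) ^ n = ((2 : NNReal) ^ n : NNReal) := by push_cast; rfl
  rw [h, ENNReal.ofReal_coe_nnreal, ENNReal.coe_zpow two_ne_zero, ENNReal.coe_ofNat]

lemma BitVec.pos_and_lt_add_of_div_eq_of_reverse_div_eq {w p q : ℕ} {x y : BitVec w}
    (hxy : x ≠ y) (hp : x.toNat / 2 ^ p = y.toNat / 2 ^ p)
    (hq : x.reverse.toNat / 2 ^ q = y.reverse.toNat / 2 ^ q) :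
    0 < p ∧ 0 < q ∧ w < p + q := by
  contrapose! hxy
  refine BitVec.eq_of_getLsbD_eq fun i hi => ?_
  by_cases hpi : p ≤ i
  · have := congrArg (Nat.testBit · (i - p)) hp
    simpa only [Nat.testBit_div_two_pow, Nat.sub_add_cancel hpi, BitVec.testBit_toNat] using this
  · have hqi : q ≤ w - 1 - i := by omega
    have := congrArg (Nat.testBit · (w - 1 - i - q)) hq
    simp only [Nat.testBit_div_two_pow, Nat.sub_add_cancel hqi, BitVec.testBit_toNat,
      BitVec.getLsbD_reverse, BitVec.getMsbD_eq_getLsbD] at this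
    simpa [show w - 1 - (w - 1 - i) = i by omega, show w - 1 - i < w by omega] using this

def vanDerCorputSquare {w : ℕ} (x : BitVec w) : Set (ℝ × ℝ) :=
  dyadicIco x.toNat (-w) ×ˢ dyadicIco x.reverse.toNat (-w)

lemma vanDerCorputSquare_subset_unitSq {w : ℕ} (x : BitVec w) :
    vanDerCorputSquare x ⊆ unitSq :=
  Set.prod_mono (dyadicIco_subset_Ico_zero_one x.isLt)
    (dyadicIco_subset_Ico_zero_one x.reverse.isLt)

theorem le_volume_of_meets_vanDerCorputSquare {w : ℕ} {x y : BitVec w} (hxy : x ≠ y)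
    {R : Set (ℝ × ℝ)} (hR : IsDyadicRect R) (hx : (R ∩ vanDerCorputSquare x).Nonempty)
    (hy : (R ∩ vanDerCorputSquare y).Nonempty) :
    (2 : ℝ≥0∞) ^ (1 - (w : ℤ)) ≤ volume R := by
  obtain ⟨I, J, ⟨k₁, n₁, rfl⟩, ⟨k₂, n₂, rfl⟩, rfl⟩ := hR
  rw [vanDerCorputSquare, Set.prod_inter_prod, Set.prod_nonempty_iff] at hx hy
  have hcol := ediv_two_pow_eq_of_meets_dyadicIco hx.1 hy.1
  have hrow := ediv_two_pow_eq_of_meets_dyadicIco hx.2 hy.2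
  obtain ⟨hp, hq, hpq⟩ := BitVec.pos_and_lt_add_of_div_eq_of_reverse_div_eq hxy
    (by exact_mod_cast hcol) (by exact_mod_cast hrow)
  rw [Measure.volume_eq_prod, Measure.prod_prod, ← dyadicIco, ← dyadicIco, volume_dyadicIco,
    volume_dyadicIco, ← ENNReal.zpow_add two_ne_zero ENNReal.ofNat_ne_top]
  exact ENNReal.zpow_le_of_le one_le_two (by omega)

/-- For every `m ≥ 0` there are `2^{2m+1}` dyadic squares of side `2^{-2m-1}` in
`[0,1)²` such that for `i ≠ j`, every dyadic rectangle intersecting both `Q i`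
and `Q j` has area at least `2^{-2m}`. -/
theorem stmt4 (m : ℕ) :
    ∃ Q : Fin (2 ^ (2 * m + 1)) → Set (ℝ × ℝ),
      (∀ i, IsDyadicSquare (-(2 * (m : ℤ)) - 1) (Q i) ∧ Q i ⊆ unitSq) ∧
      ∀ i j, i ≠ j → ∀ R : Set (ℝ × ℝ), IsDyadicRect R →
        (R ∩ Q i).Nonempty → (R ∩ Q j).Nonempty →
        (2 : ℝ≥0∞) ^ (-(2 * (m : ℤ))) ≤ volume R := by
  have hside : -(2 * (m : ℤ)) - 1 = -((2 * m + 1 : ℕ) : ℤ) := by push_cast; ring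
  have harea : -(2 * (m : ℤ)) = 1 - ((2 * m + 1 : ℕ) : ℤ) := by push_cast; ring
  refine ⟨fun i => vanDerCorputSquare (BitVec.ofFin i),
    fun i => ⟨?_, vanDerCorputSquare_subset_unitSq _⟩, fun i j hij R hR hi hj => ?_⟩
  · rw [hside]
    exact ⟨_, _, rfl⟩
  · rw [harea]
    exact le_volume_of_meets_vanDerCorputSquare (by simpa using hij) hR hi hj
end

section
/- With notation as in the construction: let Z = {z_R : R standard rectangle}, where z_R ∈ I_{(1)} × J_{(k)} is the chosen point in R = I × J (from Lemma 'pointFinder2'). For integers k, ℓ ≥ 1, let T_R = \widehat{I_{(ℓ)}} × \widehat{J_{(k)}} (the smallest dyadic rectangle containing both z_R and p_R). Then for any two distinct standard rectangles R, T, the point z_T does not belong to T_R. -/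
/-!
If `p ≠ p'`, then `T_R` is a dyadic rectangle containing both `p` and `z'` of area
`2^{1-k} |R| < 2^{-2m-1}`, contradicting the separation of `z'` from `P \ {p'}`.

If `p = p'`, use that dyadic intervals are nested or disjoint: `I` meets `I'_{(1)}` at `z'.1`
but contains `p.1 ∉ I'_{(1)}`, so `|I'_{(1)}| < |I|`, i.e. `|I'| ≤ |I|`; in the same way
`\widehat{J_{(k)}}` against `J'_{(k)}` gives `|J'| ≤ |J|`. As `R` and `R'` have equal areas, both
inequalities are equalities, and two dyadic intervals of equal length through a common point
coincide, so `R = R'`.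
-/

open MeasureTheory
open scoped ENNReal

/-- `dist_H(p,q)² = inf { |R| : R dyadic rectangle containing p and q }`. -/
noncomputable def distH2 (p q : ℝ × ℝ) : ℝ≥0∞ :=
  sInf {v | ∃ R : Set (ℝ × ℝ), IsDyadicRect R ∧ p ∈ R ∧ q ∈ R ∧ v = volume R}

open Set

namespace ENNReal

lemma two_zpow_strictMono : StrictMono fun n : ℤ => (2 : ℝ≥0∞) ^ n := by
  intro a b hab
  simp only [← coe_ofNat, ← coe_zpow (two_ne_zero : (2 : NNReal) ≠ 0), coe_lt_coe]
  exact zpow_lt_zpow_right₀ (by norm_num) hab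

lemma ofReal_two_zpow (n : ℤ) : ENNReal.ofReal ((2 : ℝ) ^ n) = 2 ^ n := by
  rw [← NNReal.coe_ofNat, ← NNReal.coe_zpow, ofReal_coe_nnreal, coe_zpow two_ne_zero]
  rfl

end ENNReal

lemma volume_prod_eq {α β : Type*} [MeasureSpace α] [MeasureSpace β] [SFinite (volume : Measure β)]
    (A : Set α) (B : Set β) : volume (A ×ˢ B) = volume A * volume B := by
  rw [Measure.volume_eq_prod, Measure.prod_prod]

lemma distH2_le_volume {p q : ℝ × ℝ} {R : Set (ℝ × ℝ)} (hR : IsDyadicRect R)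
    (hp : p ∈ R) (hq : q ∈ R) : distH2 p q ≤ volume R :=
  sInf_le ⟨R, hR, hp, hq, rfl⟩

lemma Ico_int_mul_subset_of_mem {s x : ℝ} (hs : 0 < s) {a c e : ℤ}
    (hx : x ∈ Ico ((a : ℝ) * s) ((a + 1) * s)) (hx' : x ∈ Ico ((c : ℝ) * s) (e * s)) :
    Ico ((a : ℝ) * s) ((a + 1) * s) ⊆ Ico ((c : ℝ) * s) (e * s) := by
  have hca : c ≤ a := Int.lt_add_one_iff.mp <| by
    exact_mod_cast lt_of_mul_lt_mul_right (hx'.1.trans_lt hx.2) hs.le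
  have hae : a + 1 ≤ e := Int.add_one_le_iff.mpr <| by
    exact_mod_cast lt_of_mul_lt_mul_right (hx.1.trans_lt hx'.2) hs.le
  exact Ico_subset_Ico (by gcongr) (by gcongr; exact_mod_cast hae)

namespace IsDyadicInterval

lemma volume_Ico (k n : ℤ) :
    volume (Ico ((k : ℝ) * 2 ^ n) ((k + 1) * 2 ^ n)) = (2 : ℝ≥0∞) ^ n := by
  rw [Real.volume_Ico, add_one_mul, add_sub_cancel_left, ENNReal.ofReal_two_zpow]

variable {I K : Set ℝ}

lemma exists_volume_eq (hI : IsDyadicInterval I) : ∃ n : ℤ, volume I = (2 : ℝ≥0∞) ^ n := by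
  obtain ⟨k, n, rfl⟩ := hI
  exact ⟨n, volume_Ico k n⟩

lemma subset_of_mem_of_volume_le (hI : IsDyadicInterval I) (hK : IsDyadicInterval K) {x : ℝ}
    (hxI : x ∈ I) (hxK : x ∈ K) (hIK : volume I ≤ volume K) : I ⊆ K := by
  obtain ⟨a, n, rfl⟩ := hI
  obtain ⟨b, n', rfl⟩ := hK
  rw [volume_Ico, volume_Ico, ENNReal.two_zpow_strictMono.le_iff_le] at hIK
  obtain ⟨d, rfl⟩ := Int.le.dest hIK
  have hrescale : ∀ c : ℤ, (c : ℝ) * 2 ^ (n + d) = ((c * 2 ^ d : ℤ) : ℝ) * 2 ^ n := by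
    intro c
    rw [zpow_add₀ two_ne_zero, zpow_natCast]
    push_cast
    ring
  have hrescale_succ : ((b : ℝ) + 1) * 2 ^ (n + d) = (((b + 1) * 2 ^ d : ℤ) : ℝ) * 2 ^ n := by
    exact_mod_cast hrescale (b + 1)
  rw [hrescale, hrescale_succ] at hxK ⊢
  exact Ico_int_mul_subset_of_mem (zpow_pos two_pos n) hxI hxK

lemma eq_of_mem_of_volume_eq (hI : IsDyadicInterval I) (hK : IsDyadicInterval K) {x : ℝ}
    (hxI : x ∈ I) (hxK : x ∈ K) (hIK : volume I = volume K) : I = K :=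
  (hI.subset_of_mem_of_volume_le hK hxI hxK hIK.le).antisymm
    (hK.subset_of_mem_of_volume_le hI hxK hxI hIK.ge)

lemma two_mul_volume_le_of_mem_of_not_mem (hI : IsDyadicInterval I) (hK : IsDyadicInterval K)
    {x y : ℝ} (hxI : x ∈ I) (hxK : x ∈ K) (hyI : y ∈ I) (hyK : y ∉ K) :
    2 * volume K ≤ volume I := by
  have hlt : volume K < volume I := lt_of_not_ge fun hKI =>
    hyK (hI.subset_of_mem_of_volume_le hK hxI hxK hKI hyI)
  obtain ⟨n, hn⟩ := hI.exists_volume_eq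
  obtain ⟨n', hn'⟩ := hK.exists_volume_eq
  rw [hn, hn', ENNReal.two_zpow_strictMono.lt_iff_lt] at hlt
  rw [hn, hn']
  calc 2 * (2 : ℝ≥0∞) ^ n' = 2 ^ (n' + 1) := by
        rw [ENNReal.zpow_add two_ne_zero ENNReal.ofNat_ne_top, zpow_one, mul_comm]
    _ ≤ 2 ^ n := ENNReal.two_zpow_strictMono.monotone (by omega)

end IsDyadicInterval

lemma prod_eq_of_volume_prod_eq_of_le {I J I' J' : Set ℝ} (hI : IsDyadicInterval I)
    (hJ : IsDyadicInterval J) (hI' : IsDyadicInterval I') (hJ' : IsDyadicInterval J')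
    {p : ℝ × ℝ} (hp : p ∈ I ×ˢ J) (hp' : p ∈ I' ×ˢ J')
    (hvol : volume (I ×ˢ J) = volume (I' ×ˢ J'))
    (hI'I : volume I' ≤ volume I) (hJ'J : volume J' ≤ volume J) : I ×ˢ J = I' ×ˢ J' := by
  obtain ⟨a, ha⟩ := hI.exists_volume_eq
  obtain ⟨b, hb⟩ := hJ.exists_volume_eq
  obtain ⟨a', ha'⟩ := hI'.exists_volume_eq
  obtain ⟨b', hb'⟩ := hJ'.exists_volume_eq
  simp only [volume_prod_eq, ha, hb, ha', hb', ← ENNReal.zpow_add two_ne_zero ENNReal.ofNat_ne_top,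
    ENNReal.two_zpow_strictMono.injective.eq_iff, ENNReal.two_zpow_strictMono.le_iff_le]
    at hvol hI'I hJ'J
  have hII' : volume I = volume I' := by rw [ha, ha', show a = a' by omega]
  have hJJ' : volume J = volume J' := by rw [hb, hb', show b = b' by omega]
  rw [hI.eq_of_mem_of_volume_eq hI' hp.1 hp'.1 hII', hJ.eq_of_mem_of_volume_eq hJ' hp.2 hp'.2 hJJ']

theorem stmt16_general (m k : ℕ) (hk : 1 ≤ k) (P : Finset (ℝ × ℝ))
    -- the standard rectangle `R = I × J` with its point `p`
    (I J : Set ℝ) (hI : IsDyadicInterval I) (hJ : IsDyadicInterval J)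
    (hRvol : volume (I ×ˢ J) = (2 : ℝ≥0∞) ^ (-(2 * (m : ℤ)) - 2))
    (p : ℝ × ℝ) (hpP : p ∈ P) (hpR : p ∈ I ×ˢ J)
    -- the standard rectangle `R' = I' × J'` with its point `p'`
    (I' J' : Set ℝ) (hI' : IsDyadicInterval I') (hJ' : IsDyadicInterval J')
    (hRvol' : volume (I' ×ˢ J') = (2 : ℝ≥0∞) ^ (-(2 * (m : ℤ)) - 2))
    (p' : ℝ × ℝ) (hpR' : p' ∈ I' ×ˢ J')
    (hRR' : I ×ˢ J ≠ I' ×ˢ J')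
    -- `Jk = J_{(k)}`: generation-`k` descendant of `J` avoiding `p.2`, parent containing `p.2`
    (Jk : Set ℝ)
    (hJkvol : volume Jk = (2 : ℝ≥0∞) ^ (-(k : ℤ)) * volume J)
    -- `Jkhat = \widehat{J_{(k)}}`: the dyadic parent of `Jk`, containing `p.2`
    (Jkhat : Set ℝ) (hJkhat : IsDyadicInterval Jkhat)
    (hJkhatvol : volume Jkhat = 2 * volume Jk) (hJkhatp : p.2 ∈ Jkhat)
    -- `I'₁ = I'_{(1)}` and `J'k = J'_{(k)}`
    (I'₁ : Set ℝ) (hI'₁ : IsDyadicInterval I'₁)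
    (hI'₁vol : volume I'₁ = 2⁻¹ * volume I') (hI'₁p : p'.1 ∉ I'₁)
    (J'k : Set ℝ) (hJ'k : IsDyadicInterval J'k)
    (hJ'kvol : volume J'k = (2 : ℝ≥0∞) ^ (-(k : ℤ)) * volume J') (hJ'kp : p'.2 ∉ J'k)
    -- the chosen points `z = z_R` and `z' = z_{R'}`
    (z' : ℝ × ℝ) (hz' : z' ∈ I'₁ ×ˢ J'k)
    (hz'sep : ∀ q ∈ P, q ≠ p' → (2 : ℝ≥0∞) ^ (-(2 * (m : ℤ)) - 1) ≤ distH2 q z') :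
    z' ∉ I ×ˢ Jkhat := by
  rintro ⟨hz'I, hz'Jkhat⟩
  by_cases hpp' : p = p'
  · subst hpp'
    have hI'I : volume I' ≤ volume I := by
      have := hI.two_mul_volume_le_of_mem_of_not_mem hI'₁ hz'I hz'.1 hpR.1 hI'₁p
      rwa [hI'₁vol, ← mul_assoc, ENNReal.mul_inv_cancel two_ne_zero ENNReal.ofNat_ne_top,
        one_mul] at this
    have hJ'J : volume J' ≤ volume J := by
      have := hJkhat.two_mul_volume_le_of_mem_of_not_mem hJ'k hz'Jkhat hz'.2 hJkhatp hJ'kp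
      rwa [hJkhatvol, hJkvol, hJ'kvol, ENNReal.mul_le_mul_iff_right two_ne_zero ENNReal.ofNat_ne_top,
        ENNReal.mul_le_mul_iff_right (ENNReal.zpow_pos two_ne_zero ENNReal.ofNat_ne_top _).ne'
          (ENNReal.zpow_lt_top two_ne_zero ENNReal.ofNat_ne_top _).ne] at this
    exact hRR' (prod_eq_of_volume_prod_eq_of_le hI hJ hI' hJ' hpR hpR'
      (hRvol.trans hRvol'.symm) hI'I hJ'J)
  · have hT : volume (I ×ˢ Jkhat) < 2 ^ (-(2 * (m : ℤ)) - 1) :=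
      calc volume (I ×ˢ Jkhat) = 2 ^ (1 + -(k : ℤ) + (-(2 * (m : ℤ)) - 2)) := by
            rw [ENNReal.zpow_add two_ne_zero ENNReal.ofNat_ne_top,
              ENNReal.zpow_add two_ne_zero ENNReal.ofNat_ne_top, zpow_one, ← hRvol,
              volume_prod_eq, volume_prod_eq, hJkhatvol, hJkvol]
            ring
        _ < 2 ^ (-(2 * (m : ℤ)) - 1) := ENNReal.two_zpow_strictMono (by omega)
    have hT_dyadic : IsDyadicRect (I ×ˢ Jkhat) := ⟨I, Jkhat, hI, hJkhat, rfl⟩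
    exact (hz'sep p hpP hpp').not_gt
      ((distH2_le_volume hT_dyadic ⟨hpR.1, hJkhatp⟩ ⟨hz'I, hz'Jkhat⟩).trans_lt hT)

/-- Lemma (TRz): let `R = I × J` and `R' = I' × J'` be distinct standard rectangles
with respective points `p, p'` of `P`, and let `z ∈ I_{(1)} × J_{(k)}`,
`z' ∈ I'_{(1)} × J'_{(k)}` be the chosen points (far from all other points of `P`).
Then `z' ∉ T_R`, where `T_R = \widehat{I_{(1)}} × \widehat{J_{(k)}} = I × \widehat{J_{(k)}}`
is the smallest dyadic rectangle containing both `z` and `p`. -/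
theorem stmt16 (m k : ℕ) (hk : 1 ≤ k) (P : Finset (ℝ × ℝ))
    (hPsub : (↑P : Set (ℝ × ℝ)) ⊆ unitSq)
    (hP1 : ∀ R : Set (ℝ × ℝ), IsDyadicRect R → R ⊆ unitSq →
      volume R = (2 : ℝ≥0∞) ^ (-(2 * (m : ℤ)) - 1) → ∃! q, q ∈ P ∧ q ∈ R)
    (hP2 : ∀ p ∈ P, ∀ q ∈ P, p ≠ q → ∀ R : Set (ℝ × ℝ), IsDyadicRect R →
      p ∈ R → q ∈ R → (2 : ℝ≥0∞) ^ (-(2 * (m : ℤ))) ≤ volume R)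
    -- the standard rectangle `R = I × J` with its point `p`
    (I J : Set ℝ) (hI : IsDyadicInterval I) (hJ : IsDyadicInterval J)
    (hRsub : I ×ˢ J ⊆ unitSq)
    (hRvol : volume (I ×ˢ J) = (2 : ℝ≥0∞) ^ (-(2 * (m : ℤ)) - 2))
    (p : ℝ × ℝ) (hpP : p ∈ P) (hpR : p ∈ I ×ˢ J)
    -- the standard rectangle `R' = I' × J'` with its point `p'`
    (I' J' : Set ℝ) (hI' : IsDyadicInterval I') (hJ' : IsDyadicInterval J')
    (hRsub' : I' ×ˢ J' ⊆ unitSq)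
    (hRvol' : volume (I' ×ˢ J') = (2 : ℝ≥0∞) ^ (-(2 * (m : ℤ)) - 2))
    (p' : ℝ × ℝ) (hpP' : p' ∈ P) (hpR' : p' ∈ I' ×ˢ J')
    (hRR' : I ×ˢ J ≠ I' ×ˢ J')
    -- `I₁ = I_{(1)}`: the dyadic child of `I` not containing `p.1`
    (I₁ : Set ℝ) (hI₁ : IsDyadicInterval I₁) (hI₁I : I₁ ⊆ I)
    (hI₁vol : volume I₁ = 2⁻¹ * volume I) (hI₁p : p.1 ∉ I₁)
    -- `Jk = J_{(k)}`: generation-`k` descendant of `J` avoiding `p.2`, parent containing `p.2`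
    (Jk : Set ℝ) (hJk : IsDyadicInterval Jk) (hJkJ : Jk ⊆ J)
    (hJkvol : volume Jk = (2 : ℝ≥0∞) ^ (-(k : ℤ)) * volume J) (hJkp : p.2 ∉ Jk)
    -- `Jkhat = \widehat{J_{(k)}}`: the dyadic parent of `Jk`, containing `p.2`
    (Jkhat : Set ℝ) (hJkhat : IsDyadicInterval Jkhat) (hJkJkhat : Jk ⊆ Jkhat)
    (hJkhatvol : volume Jkhat = 2 * volume Jk) (hJkhatp : p.2 ∈ Jkhat)
    -- `I'₁ = I'_{(1)}` and `J'k = J'_{(k)}`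
    (I'₁ : Set ℝ) (hI'₁ : IsDyadicInterval I'₁) (hI'₁I : I'₁ ⊆ I')
    (hI'₁vol : volume I'₁ = 2⁻¹ * volume I') (hI'₁p : p'.1 ∉ I'₁)
    (J'k : Set ℝ) (hJ'k : IsDyadicInterval J'k) (hJ'kJ : J'k ⊆ J')
    (hJ'kvol : volume J'k = (2 : ℝ≥0∞) ^ (-(k : ℤ)) * volume J') (hJ'kp : p'.2 ∉ J'k)
    (hJ'kpar : ∃ Jhat : Set ℝ, IsDyadicInterval Jhat ∧ J'k ⊆ Jhat ∧
      volume Jhat = 2 * volume J'k ∧ p'.2 ∈ Jhat)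
    -- the chosen points `z = z_R` and `z' = z_{R'}`
    (z z' : ℝ × ℝ) (hz : z ∈ I₁ ×ˢ Jk) (hz' : z' ∈ I'₁ ×ˢ J'k)
    (hzsep : ∀ q ∈ P, q ≠ p → (2 : ℝ≥0∞) ^ (-(2 * (m : ℤ)) - 1) ≤ distH2 q z)
    (hz'sep : ∀ q ∈ P, q ≠ p' → (2 : ℝ≥0∞) ^ (-(2 * (m : ℤ)) - 1) ≤ distH2 q z') :
    z' ∉ I ×ˢ Jkhat :=
  stmt16_general m k hk P I J hI hJ hRvol p hpP hpR I' J' hI' hJ' hRvol' p' hpR' hRR' Jk hJkvol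
    Jkhat hJkhat hJkhatvol hJkhatp I'₁ hI'₁ hI'₁vol hI'₁p J'k hJ'k hJ'kvol hJ'kp z' hz' hz'sep
end
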